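/- Let w be a prefix-shuffle. Then in the binary tree λ₁(w) produced by the recursive construction, the number of active right leaves is |w|_a − |w|_ā + 1 and the number of active left leaves is |w|_b − |w|_b̄ + 1; moreover λ₁(w) has |w|_a + |w|_b + 1 internal nodes. -/
import Mathlib


/-- The four letters `a, ā, b, b̄`. -/
inductive L4 : Type
  | a | abar | b | bbar
deriving DecidableEq

/-- Prefix-shuffles: every prefix has at least as many `a`'s as `ā`'s and
at least as many `b`'s as `b̄`'s. -/
def IsPrefixShuffle (w : List L4) : Prop :=
  ∀ p ∈ w.inits, p.count L4.abar ≤ p.count L4.a ∧ p.count L4.bbar ≤ p.count L4.b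

/-- Binary trees whose leaves carry an activity flag (`true` = active). -/
inductive BT : Type
  | leaf : Bool → BT
  | node : BT → BT → BT
deriving DecidableEq

/-- `B₁`: a single node with two active leaves. -/
def B1 : BT := BT.node (BT.leaf true) (BT.leaf true)

/-- Apply `g` to the first (in contour/preorder) active leaf whose side is `want`
(`true` = left leaf, `false` = right leaf); `side` is the side of the current subtree. -/
def goFirst (want : Bool) (g : Bool → BT) : Bool → BT → Option BT
  | side, BT.leaf act => if act && (side == want) then some (g act) else none
  | _, BT.node l r =>
    match goFirst want g true l with
    | some l' => some (BT.node l' r)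
    | none => (goFirst want g false r).map (fun r' => BT.node l r')

/-- Apply `g` to the last (in contour/preorder) active leaf whose side is `want`. -/
def goLast (want : Bool) (g : Bool → BT) : Bool → BT → Option BT
  | side, BT.leaf act => if act && (side == want) then some (g act) else none
  | _, BT.node l r =>
    match goLast want g false r with
    | some r' => some (BT.node l r')
    | none => (goLast want g true l).map (fun l' => BT.node l' r)

/-- One step of the recursive construction of `λ₁`:
`a` replaces the last active left leaf by `B₁`, `b` replaces the first active right
leaf by `B₁`, `ā` inactivates the first active right leaf, `b̄` inactivates the last
active left leaf.  (The root position counts as left.) -/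
def lamStep (t : BT) : L4 → BT
  | L4.a => (goLast true (fun _ => B1) true t).getD t
  | L4.b => (goFirst false (fun _ => B1) true t).getD t
  | L4.abar => (goFirst false (fun _ => BT.leaf false) true t).getD t
  | L4.bbar => (goLast true (fun _ => BT.leaf false) true t).getD t

/-- The binary tree `λ₁(w)`. -/
def lam1 (w : List L4) : BT := w.foldl lamStep B1

/-- Number of active leaves of a given side (`want`; `true` = left). -/
def countActive (want : Bool) : Bool → BT → ℕ
  | side, BT.leaf act => if act && (side == want) then 1 else 0
  | _, BT.node l r => countActive want true l + countActive want false r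

/-- Number of internal nodes. -/
def numNodes : BT → ℕ
  | BT.leaf _ => 0
  | BT.node l r => numNodes l + numNodes r + 1

lemma goFirst_isSome (want : Bool) (g : Bool → BT) :
    ∀ (t : BT) (side : Bool), 0 < countActive want side t →
      (goFirst want g side t).isSome := by
  intro t
  induction t with
  | leaf act =>
    intro side h
    simp only [countActive] at h
    split at h
    · simp [goFirst, *]
    · omega
  | node l r ihl ihr =>
    intro side h
    simp only [countActive] at h
    simp only [goFirst]
    cases hl : goFirst want g true l with
    | some l' => simp
    | none =>
      cases hr : goFirst want g false r with
      | some r' => simp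
      | none =>
        rcases (by omega : 0 < countActive want true l ∨ 0 < countActive want false r) with h1 | h2
        · have := ihl true h1; rw [hl] at this; simp at this
        · have := ihr false h2; rw [hr] at this; simp at this

lemma goLast_isSome (want : Bool) (g : Bool → BT) :
    ∀ (t : BT) (side : Bool), 0 < countActive want side t →
      (goLast want g side t).isSome := by
  intro t
  induction t with
  | leaf act =>
    intro side h
    simp only [countActive] at h
    split at h
    · simp [goLast, *]
    · omega
  | node l r ihl ihr =>
    intro side h
    simp only [countActive] at h
    simp only [goLast]
    cases hr : goLast want g false r with
    | some r' => simp
    | none =>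
      cases hl : goLast want g true l with
      | some l' => simp
      | none =>
        rcases (by omega : 0 < countActive want true l ∨ 0 < countActive want false r) with h1 | h2
        · have := ihl true h1; rw [hl] at this; simp at this
        · have := ihr false h2; rw [hr] at this; simp at this

lemma goFirst_counts (want : Bool) (u : BT) (cu cun : ℕ)
    (hu : ∀ s, countActive want s u = cu) (hun : ∀ s, countActive (!want) s u = cun) :
    ∀ (t : BT) (t' : BT) (side : Bool), goFirst want (fun _ => u) side t = some t' →
      countActive want side t' + 1 = countActive want side t + cu ∧
      countActive (!want) side t' = countActive (!want) side t + cun ∧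
      numNodes t' = numNodes t + numNodes u := by
  intro t
  induction t with
  | leaf act =>
    intro t' side h
    simp only [goFirst] at h
    split at h
    · rename_i hc
      rw [Option.some_inj] at h
      subst h
      simp only [Bool.and_eq_true, beq_iff_eq] at hc
      obtain ⟨ha, hs⟩ := hc
      subst ha hs
      simp [countActive, hu, hun, numNodes]
      omega
    · exact absurd h (by simp)
  | node l r ihl ihr =>
    intro t' side h
    simp only [goFirst] at h
    cases hl : goFirst want (fun _ => u) true l with
    | some l' =>
      rw [hl] at h
      rw [Option.some_inj] at h
      subst h
      obtain ⟨h1, h2, h3⟩ := ihl l' true hl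
      simp only [countActive, numNodes]
      omega
    | none =>
      rw [hl] at h
      simp only [Option.map_eq_some_iff] at h
      obtain ⟨r', hr, h⟩ := h
      subst h
      obtain ⟨h1, h2, h3⟩ := ihr r' false hr
      simp only [countActive, numNodes]
      omega

lemma goLast_counts (want : Bool) (u : BT) (cu cun : ℕ)
    (hu : ∀ s, countActive want s u = cu) (hun : ∀ s, countActive (!want) s u = cun) :
    ∀ (t : BT) (t' : BT) (side : Bool), goLast want (fun _ => u) side t = some t' →
      countActive want side t' + 1 = countActive want side t + cu ∧
      countActive (!want) side t' = countActive (!want) side t + cun ∧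
      numNodes t' = numNodes t + numNodes u := by
  intro t
  induction t with
  | leaf act =>
    intro t' side h
    simp only [goLast] at h
    split at h
    · rename_i hc
      rw [Option.some_inj] at h
      subst h
      simp only [Bool.and_eq_true, beq_iff_eq] at hc
      obtain ⟨ha, hs⟩ := hc
      subst ha hs
      simp [countActive, hu, hun, numNodes]
      omega
    · exact absurd h (by simp)
  | node l r ihl ihr =>
    intro t' side h
    simp only [goLast] at h
    cases hr : goLast want (fun _ => u) false r with
    | some r' =>
      rw [hr] at h
      rw [Option.some_inj] at h
      subst h
      obtain ⟨h1, h2, h3⟩ := ihr r' false hr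
      simp only [countActive, numNodes]
      omega
    | none =>
      rw [hr] at h
      simp only [Option.map_eq_some_iff] at h
      obtain ⟨l', hl, h⟩ := h
      subst h
      obtain ⟨h1, h2, h3⟩ := ihl l' true hl
      simp only [countActive, numNodes]
      omega

lemma countActive_B1 (want s : Bool) : countActive want s B1 = 1 := by
  cases want <;> cases s <;> simp [B1, countActive]

lemma lam1_concat (w : List L4) (x : L4) : lam1 (w ++ [x]) = lamStep (lam1 w) x := by
  simp [lam1, List.foldl_append]


/-- For a prefix-shuffle `w`, `λ₁(w)` has `|w|_a − |w|_ā + 1` active right leaves,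
`|w|_b − |w|_b̄ + 1` active left leaves, and `|w|_a + |w|_b + 1` internal nodes. -/
theorem lam1_counts (w : List L4) (hw : IsPrefixShuffle w) :
    countActive false true (lam1 w) = w.count L4.a - w.count L4.abar + 1 ∧
    countActive true true (lam1 w) = w.count L4.b - w.count L4.bbar + 1 ∧
    numNodes (lam1 w) = w.count L4.a + w.count L4.b + 1 := by
  induction w using List.reverseRecOn with
  | nil => simp [lam1, B1, countActive, numNodes]
  | append_singleton w x ih =>
    have hw' : IsPrefixShuffle w := by
      intro p hp
      apply hw
      rw [List.mem_inits] at hp ⊢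
      exact hp.trans ⟨[x], rfl⟩
    have hself := hw w (by rw [List.mem_inits]; exact ⟨[x], rfl⟩)
    have hfull := hw (w ++ [x]) (by rw [List.mem_inits])
    obtain ⟨h1, h2, h3⟩ := ih hw'
    rw [lam1_concat]
    set t := lam1 w with ht
    cases x with
    | a =>
      obtain ⟨t', ht'⟩ := Option.isSome_iff_exists.mp
        (goLast_isSome true (fun _ => B1) t true (by omega))
      have hc := goLast_counts true B1 1 1 (fun s => countActive_B1 true s)
        (fun s => countActive_B1 false s) t t' true ht'
      simp only [lamStep, ht', Option.getD_some]
      simp only [Bool.not_true] at hc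
      simp only [numNodes, B1] at hc
      obtain ⟨hself1, hself2⟩ := hself
      simp (config := { decide := true }) [List.count_append, List.count_cons] at hfull ⊢
      omega
    | b =>
      obtain ⟨t', ht'⟩ := Option.isSome_iff_exists.mp
        (goFirst_isSome false (fun _ => B1) t true (by omega))
      have hc := goFirst_counts false B1 1 1 (fun s => countActive_B1 false s)
        (fun s => countActive_B1 true s) t t' true ht'
      simp only [lamStep, ht', Option.getD_some]
      simp only [Bool.not_false] at hc
      simp only [numNodes, B1] at hc
      obtain ⟨hself1, hself2⟩ := hself
      simp (config := { decide := true }) [List.count_append, List.count_cons] at hfull ⊢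
      omega
    | abar =>
      obtain ⟨t', ht'⟩ := Option.isSome_iff_exists.mp
        (goFirst_isSome false (fun _ => BT.leaf false) t true (by omega))
      have hc := goFirst_counts false (BT.leaf false) 0 0
        (fun s => by simp [countActive]) (fun s => by simp [countActive]) t t' true ht'
      simp only [lamStep, ht', Option.getD_some]
      simp only [Bool.not_false] at hc
      simp only [numNodes] at hc
      obtain ⟨hfull1, hfull2⟩ := hfull
      obtain ⟨hself1, hself2⟩ := hself
      simp (config := { decide := true }) [List.count_append, List.count_cons] at hfull1 hfull2 ⊢
      omega
    | bbar =>
      obtain ⟨t', ht'⟩ := Option.isSome_iff_exists.mp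
        (goLast_isSome true (fun _ => BT.leaf false) t true (by omega))
      have hc := goLast_counts true (BT.leaf false) 0 0
        (fun s => by simp [countActive]) (fun s => by simp [countActive]) t t' true ht'
      simp only [lamStep, ht', Option.getD_some]
      simp only [Bool.not_true] at hc
      simp only [numNodes] at hc
      obtain ⟨hfull1, hfull2⟩ := hfull
      obtain ⟨hself1, hself2⟩ := hself
      simp (config := { decide := true }) [List.count_append, List.count_cons] at hfull1 hfull2 ⊢
      omega
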